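/- arXiv:2002.00483 — 3 statements merged into one kernel-verified Lean document; each statement's English description precedes it below -/
import Mathlib

section
/- Let N be a normal network on X, where |X| ≥ 2. Then N has either a cherry or a reticulated cherry. -/
/-- A (raw) phylogenetic network structure: a vertex type, an arc relation
(arcs are directed; since `arc` is a relation there are no parallel arcs),
and a labelling of the (potential) leaves by elements of `α`. -/
structure PhyloNet (α : Type) : Type 1 where
  V : Type
  arc : V → V → Prop
  leafMap : α → V

namespace PhyloNet

variable {α : Type}

/-- In-degree of a vertex. -/
noncomputable def inDeg (N : PhyloNet α) (v : N.V) : ℕ := {u : N.V | N.arc u v}.ncard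

/-- Out-degree of a vertex. -/
noncomputable def outDeg (N : PhyloNet α) (v : N.V) : ℕ := {u : N.V | N.arc v u}.ncard

/-- A leaf is a vertex of out-degree zero. -/
def IsLeaf (N : PhyloNet α) (v : N.V) : Prop := N.outDeg v = 0

/-- A reticulation is a vertex of in-degree two. -/
def IsRet (N : PhyloNet α) (v : N.V) : Prop := N.inDeg v = 2

/-- A tree vertex has in-degree one and out-degree two. -/
def IsTreeVert (N : PhyloNet α) (v : N.V) : Prop := N.inDeg v = 1 ∧ N.outDeg v = 2

/-- A root: in-degree zero and every vertex is reachable from it. -/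
def IsRoot (N : PhyloNet α) (r : N.V) : Prop :=
  N.inDeg r = 0 ∧ ∀ v : N.V, Relation.ReflTransGen N.arc r v

/-- `N` is a rooted binary phylogenetic network on the (nonempty, finite) leaf set `X`. -/
structure IsNetworkOn (N : PhyloNet α) (X : Finset α) : Prop where
  nonemptyX : X.Nonempty
  finiteV : Finite N.V
  acyclic : ∀ v : N.V, ¬ Relation.TransGen N.arc v v
  rooted : ∃ r : N.V, N.IsRoot r
  leaf_isLeaf : ∀ x ∈ X, N.IsLeaf (N.leafMap x)
  leaf_inj : ∀ x ∈ X, ∀ y ∈ X, N.leafMap x = N.leafMap y → x = y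
  leaf_surj : ∀ v : N.V, N.IsLeaf v → ∃ x ∈ X, N.leafMap x = v
  degrees : (X.card = 1 ∧ Subsingleton N.V) ∨
    (∀ v : N.V,
      (N.inDeg v = 0 ∧ N.outDeg v = 2) ∨ (N.inDeg v = 1 ∧ N.outDeg v = 0) ∨
      (N.inDeg v = 1 ∧ N.outDeg v = 2) ∨ (N.inDeg v = 2 ∧ N.outDeg v = 1))

/-- A phylogenetic tree is a phylogenetic network with no reticulations. -/
def IsTree (N : PhyloNet α) : Prop := ∀ v : N.V, ¬ N.IsRet v

/-- Tree-child: every non-leaf vertex has a child that is not a reticulation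
(i.e. a child that is a tree vertex or a leaf). -/
def TreeChild (N : PhyloNet α) : Prop :=
  ∀ v : N.V, ¬ N.IsLeaf v → ∃ w : N.V, N.arc v w ∧ ¬ N.IsRet w

/-- A shortcut: a reticulation arc `(u, v)` such that there is a directed path
from `u` to `v` avoiding the arc `(u, v)`. -/
def Shortcut (N : PhyloNet α) (u v : N.V) : Prop :=
  N.arc u v ∧ N.IsRet v ∧
    Relation.TransGen (fun p q => N.arc p q ∧ ¬(p = u ∧ q = v)) u v

/-- Normal: tree-child with no shortcuts. -/
def Normal (N : PhyloNet α) : Prop := N.TreeChild ∧ ∀ u v : N.V, ¬ N.Shortcut u v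

/-- Temporal: there is a time map, with positive values, that is constant on
reticulation arcs and strictly increasing on tree arcs. -/
def Temporal (N : PhyloNet α) : Prop :=
  ∃ t : N.V → ℝ, (∀ v : N.V, 0 < t v) ∧
    ∀ u v : N.V, N.arc u v → ((N.IsRet v → t u = t v) ∧ (¬ N.IsRet v → t u < t v))

/-- A system of directed paths in `N` with prescribed endpoints, pairwise
internally vertex-disjoint (two different paths meet only in common endpoints). -/
def PathSys (N : PhyloNet α) (es : List (N.V × N.V)) : Prop :=
  ∃ P : N.V × N.V → List N.V,
    (∀ e ∈ es, (P e).Chain' N.arc ∧ (P e).head? = some e.1 ∧ (P e).getLast? = some e.2) ∧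
    (∀ e ∈ es, ∀ e' ∈ es, e ≠ e' → ∀ w ∈ P e, w ∈ P e' →
      (w = e.1 ∨ w = e.2) ∧ (w = e'.1 ∨ w = e'.2))

/-- `N` displays the triple `xy|z`: a subdivision of the caterpillar `(x, y, z)`
is a subgraph of `N`. -/
def DisplaysTriple (N : PhyloNet α) (X : Finset α) (x y z : α) : Prop :=
  x ∈ X ∧ y ∈ X ∧ z ∈ X ∧ x ≠ y ∧ x ≠ z ∧ y ≠ z ∧
  ∃ r v : N.V, ([r, v, N.leafMap x, N.leafMap y, N.leafMap z]).Pairwise (· ≠ ·) ∧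
    N.PathSys [(r, v), (v, N.leafMap x), (v, N.leafMap y), (r, N.leafMap z)]

/-- `N` displays the quad (caterpillar) `(x₁, x₂, x₃, x₄)`: a subdivision of the
caterpillar on four leaves is a subgraph of `N`. -/
def DisplaysQuad (N : PhyloNet α) (X : Finset α) (x₁ x₂ x₃ x₄ : α) : Prop :=
  x₁ ∈ X ∧ x₂ ∈ X ∧ x₃ ∈ X ∧ x₄ ∈ X ∧
  x₁ ≠ x₂ ∧ x₁ ≠ x₃ ∧ x₁ ≠ x₄ ∧ x₂ ≠ x₃ ∧ x₂ ≠ x₄ ∧ x₃ ≠ x₄ ∧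
  ∃ r q p : N.V,
    ([r, q, p, N.leafMap x₁, N.leafMap x₂, N.leafMap x₃, N.leafMap x₄]).Pairwise (· ≠ ·) ∧
    N.PathSys [(r, q), (q, p), (p, N.leafMap x₁), (p, N.leafMap x₂),
               (q, N.leafMap x₃), (r, N.leafMap x₄)]

/-- `N` displays the phylogenetic tree `T` with leaf set `X'`: a subdivision of
`T` is a subgraph of `N`, with the leaves labelled consistently. -/
def Displays (N T : PhyloNet α) (X' : Finset α) : Prop :=
  ∃ (f : T.V → N.V) (P : T.V → T.V → List N.V),
    Function.Injective f ∧
    (∀ x ∈ X', f (T.leafMap x) = N.leafMap x) ∧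
    (∀ u v : T.V, T.arc u v →
      (P u v).Chain' N.arc ∧ (P u v).head? = some (f u) ∧ (P u v).getLast? = some (f v)) ∧
    (∀ u v u' v' : T.V, T.arc u v → T.arc u' v' → (u, v) ≠ (u', v') →
      ∀ w : N.V, w ∈ P u v → w ∈ P u' v' →
        (w = f u ∨ w = f v) ∧ (w = f u' ∨ w = f v')) ∧
    (∀ u v w : T.V, T.arc u v → f w ∈ P u v → w = u ∨ w = v)

/-- Isomorphism of two phylogenetic networks on `X`: an arc-preserving bijection
of the vertex sets fixing every leaf label in `X`. -/
def Isom (N N' : PhyloNet α) (X : Finset α) : Prop :=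
  ∃ φ : N.V ≃ N'.V, (∀ x ∈ X, φ (N.leafMap x) = N'.leafMap x) ∧
    ∀ u v : N.V, N.arc u v ↔ N'.arc (φ u) (φ v)

/-- `{a, b}` is a cherry: the leaves `a` and `b` have the same parent. -/
def Cherry (N : PhyloNet α) (a b : α) : Prop :=
  a ≠ b ∧ ∃ p : N.V, N.arc p (N.leafMap a) ∧ N.arc p (N.leafMap b)

/-- `{a, b}` is a reticulated cherry with reticulation leaf `b`:
the parent of `b` is a reticulation and there is an arc from the parent of `a`
to the parent of `b`. -/
def RetCherry (N : PhyloNet α) (a b : α) : Prop :=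
  a ≠ b ∧ ∃ pa pb : N.V, N.arc pa (N.leafMap a) ∧ N.arc pb (N.leafMap b) ∧
    N.IsRet pb ∧ N.arc pa pb

/-- `{a, b, c}` is a double-reticulated cherry with reticulation leaf `b`. -/
def DoubleRetCherry (N : PhyloNet α) (a b c : α) : Prop :=
  a ≠ b ∧ b ≠ c ∧ a ≠ c ∧
  ∃ pa pb pc : N.V, N.arc pa (N.leafMap a) ∧ N.arc pb (N.leafMap b) ∧
    N.arc pc (N.leafMap c) ∧ N.IsRet pb ∧ N.arc pa pb ∧ N.arc pc pb

/-- There is a directed path from `a` to `b` that avoids the vertex `u` entirely. -/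
def AvoidReach (N : PhyloNet α) (u a b : N.V) : Prop :=
  a ≠ u ∧ b ≠ u ∧ Relation.ReflTransGen (fun p q => N.arc p q ∧ p ≠ u ∧ q ≠ u) a b

/-- The visibility set of a vertex `u`: the leaves `x ∈ X` such that every
directed path from the root to `x` traverses `u`. -/
def visSet (N : PhyloNet α) (X : Finset α) (u : N.V) : Set α :=
  {x | x ∈ X ∧ ∀ r : N.V, N.IsRoot r → ¬ N.AvoidReach u r (N.leafMap x)}

/-- The cluster set of a vertex `u`: the leaves `x ∈ X` reachable from `u`. -/
def clusterSet (N : PhyloNet α) (X : Finset α) (u : N.V) : Set α :=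
  {x | x ∈ X ∧ Relation.ReflTransGen N.arc u (N.leafMap x)}

/-- A tree path from `u` to `v`: a directed path in which every vertex except
`v` (and possibly `u`) is a tree vertex. -/
def TreePathTo (N : PhyloNet α) (u v : N.V) : Prop :=
  ∃ l : List N.V, l.Chain' N.arc ∧ l.head? = some u ∧ l.getLast? = some v ∧
    ∀ w ∈ l, w ≠ u → w ≠ v → N.IsTreeVert w

/-- A candidate set for `b` (relative to `a`). -/
def CandidateSet (N : PhyloNet α) (X : Finset α) (a b : α) (W : Set α) : Prop :=
  W.Nonempty ∧ W ⊆ (↑X : Set α) \ {a, b} ∧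
  (∀ c ∈ W, ∀ x ∈ X, x ∉ W → x ≠ b →
    N.DisplaysTriple X b c x ∧ ¬ N.DisplaysTriple X a c b) ∧
  (∀ c ∈ W, ∀ c' ∈ W, c ≠ c' → ¬ N.DisplaysTriple X b c c') ∧
  (∀ c ∈ W, ∀ x ∈ X, x ∉ W → x ≠ a → x ≠ b → ¬ N.DisplaysQuad X x b c a)

/-- `N'` is obtained from `N` by deleting the leaf `b` of the cherry `{a, b}`
(with common parent `p`): delete `b` and its incident arc, and suppress `p`. -/
def DelCherry (N N' : PhyloNet α) (X : Finset α) (a b : α) : Prop :=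
  ∃ (p : N.V) (j : N'.V → N.V),
    N.arc p (N.leafMap a) ∧ N.arc p (N.leafMap b) ∧
    Function.Injective j ∧
    (∀ x ∈ X, x ≠ b → j (N'.leafMap x) = N.leafMap x) ∧
    (∀ v : N.V, v ≠ p → v ≠ N.leafMap b → ∃ w : N'.V, j w = v) ∧
    (∀ w : N'.V, j w ≠ p ∧ j w ≠ N.leafMap b) ∧
    (∀ u v : N'.V, N'.arc u v ↔
      (N.arc (j u) (j v) ∨ (N.arc (j u) p ∧ N.arc p (j v))))

/-- `N'` is obtained from `N` by deleting the reticulation leaf `b` of the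
reticulated cherry `{a, b}`: delete `b`, its parent `pb` and their incident
arcs, and suppress the parent `pa` of `a` and the other parent `gb` of `pb`. -/
def DelRetCherry (N N' : PhyloNet α) (X : Finset α) (a b : α) : Prop :=
  ∃ (pa pb gb : N.V) (j : N'.V → N.V),
    N.arc pa (N.leafMap a) ∧ N.arc pb (N.leafMap b) ∧ N.IsRet pb ∧
    N.arc pa pb ∧ N.arc gb pb ∧ gb ≠ pa ∧
    Function.Injective j ∧
    (∀ x ∈ X, x ≠ b → j (N'.leafMap x) = N.leafMap x) ∧
    (∀ v : N.V, v ∉ ({pa, pb, gb, N.leafMap b} : Set N.V) → ∃ w : N'.V, j w = v) ∧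
    (∀ w : N'.V, j w ∉ ({pa, pb, gb, N.leafMap b} : Set N.V)) ∧
    (∀ u v : N'.V, N'.arc u v ↔
      (N.arc (j u) (j v) ∨ (N.arc (j u) pa ∧ N.arc pa (j v)) ∨
       (N.arc (j u) gb ∧ N.arc gb (j v))))

/-- `N'` is obtained from `N` by deleting the reticulation leaf `b` of the
double-reticulated cherry `{a, b, c}`: delete `b`, `pb` and their incident
arcs, and suppress `pa` and `pc`. -/
def DelDoubleRetCherry (N N' : PhyloNet α) (X : Finset α) (a b c : α) : Prop :=
  ∃ (pa pb pc : N.V) (j : N'.V → N.V),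
    N.arc pa (N.leafMap a) ∧ N.arc pb (N.leafMap b) ∧ N.arc pc (N.leafMap c) ∧
    N.IsRet pb ∧ N.arc pa pb ∧ N.arc pc pb ∧
    Function.Injective j ∧
    (∀ x ∈ X, x ≠ b → j (N'.leafMap x) = N.leafMap x) ∧
    (∀ v : N.V, v ∉ ({pa, pb, pc, N.leafMap b} : Set N.V) → ∃ w : N'.V, j w = v) ∧
    (∀ w : N'.V, j w ∉ ({pa, pb, pc, N.leafMap b} : Set N.V)) ∧
    (∀ u v : N'.V, N'.arc u v ↔
      (N.arc (j u) (j v) ∨ (N.arc (j u) pa ∧ N.arc pa (j v)) ∨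
       (N.arc (j u) pc ∧ N.arc pc (j v))))

end PhyloNet

/-!
Take a vertex `u` of out-degree two with no vertex of out-degree two below it; it exists because
the network is finite and acyclic and the root has out-degree two. Every vertex strictly below `u`
is then a leaf or a reticulation. By the tree-child property one child of `u` is a leaf `a`. The
other child is either a leaf, giving a cherry, or a reticulation whose child is, again by the
tree-child property, a leaf, giving a reticulated cherry with `a`.
-/

theorem exists_lowest_of_acyclic {β : Type*} [Finite β] {r : β → β → Prop}
    (hacyc : ∀ v, ¬ Relation.TransGen r v v) {P : β → Prop} {v : β} (hv : P v) :
    ∃ u, P u ∧ ∀ c, Relation.TransGen r u c → ¬ P c := by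
  let below : β → β → Prop := fun a b => Relation.TransGen r b a
  have : IsTrans β below := ⟨fun _ _ _ h₁ h₂ => h₂.trans h₁⟩
  have : Std.Irrefl below := ⟨hacyc⟩
  obtain ⟨u, hu, hmin⟩ := (Finite.wellFounded_of_trans_of_irrefl below).has_min {v | P v} ⟨v, hv⟩
  exact ⟨u, hu, fun c huc hc => hmin c hc huc⟩

namespace PhyloNet

variable {α : Type} {X : Finset α} {N : PhyloNet α}

theorem eq_of_arc_of_inDeg_eq_one {u u' v : N.V} (hv : N.inDeg v = 1)
    (hu : N.arc u v) (hu' : N.arc u' v) : u = u' := by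
  obtain ⟨p, hp⟩ := Set.ncard_eq_one.mp hv
  have hu : u ∈ {w | N.arc w v} := hu
  have hu' : u' ∈ {w | N.arc w v} := hu'
  rw [hp] at hu hu'
  exact hu.trans hu'.symm

theorem exists_arc_ne_of_outDeg_eq_two {v : N.V} (hv : N.outDeg v = 2) (w : N.V) :
    ∃ w', N.arc v w' ∧ w' ≠ w :=
  Set.exists_ne_of_one_lt_ncard (show 1 < N.outDeg v by omega) w

def IsBinary (N : PhyloNet α) : Prop :=
  ∀ v : N.V,
    (N.inDeg v = 0 ∧ N.outDeg v = 2) ∨ (N.inDeg v = 1 ∧ N.outDeg v = 0) ∨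
      (N.inDeg v = 1 ∧ N.outDeg v = 2) ∨ (N.inDeg v = 2 ∧ N.outDeg v = 1)

theorem IsNetworkOn.isBinary (hN : N.IsNetworkOn X) (hX : 2 ≤ X.card) : N.IsBinary :=
  hN.degrees.resolve_left fun h => by omega

namespace IsBinary

variable {v : N.V}

theorem outDeg_eq_two_of_inDeg_eq_zero (hB : N.IsBinary) (hv : N.inDeg v = 0) :
    N.outDeg v = 2 := by
  rcases hB v with h | h | h | h <;> omega

theorem outDeg_eq_one_of_isRet (hB : N.IsBinary) (hv : N.IsRet v) : N.outDeg v = 1 := by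
  unfold IsRet at hv
  rcases hB v with h | h | h | h <;> omega

theorem isLeaf_of_not_isRet (hB : N.IsBinary) (h2 : N.outDeg v ≠ 2) (hv : ¬ N.IsRet v) :
    N.inDeg v = 1 ∧ N.IsLeaf v := by
  unfold IsRet at hv
  unfold IsLeaf
  rcases hB v with h | h | h | h <;> omega

end IsBinary

theorem IsNetworkOn.cherry_of_arcs (hN : N.IsNetworkOn X) {p v w : N.V}
    (hv : N.IsLeaf v) (hw : N.IsLeaf w) (hvw : v ≠ w) (hpv : N.arc p v) (hpw : N.arc p w) :
    ∃ a ∈ X, ∃ b ∈ X, N.Cherry a b := by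
  obtain ⟨a, ha, rfl⟩ := hN.leaf_surj v hv
  obtain ⟨b, hb, rfl⟩ := hN.leaf_surj w hw
  exact ⟨a, ha, b, hb, fun hab => hvw (hab ▸ rfl), p, hpv, hpw⟩

theorem IsNetworkOn.retCherry_of_arcs (hN : N.IsNetworkOn X) {p q v w : N.V}
    (hv : N.IsLeaf v) (hw : N.IsLeaf w) (hvw : v ≠ w) (hpv : N.arc p v) (hqw : N.arc q w)
    (hq : N.IsRet q) (hpq : N.arc p q) :
    ∃ a ∈ X, ∃ b ∈ X, N.RetCherry a b := by
  obtain ⟨a, ha, rfl⟩ := hN.leaf_surj v hv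
  obtain ⟨b, hb, rfl⟩ := hN.leaf_surj w hw
  exact ⟨a, ha, b, hb, fun hab => hvw (hab ▸ rfl), p, q, hpv, hqw, hq, hpq⟩

theorem IsNetworkOn.exists_cherry_or_retCherry_of_lowest (hN : N.IsNetworkOn X)
    (hB : N.IsBinary) (htc : N.TreeChild) {u : N.V} (hu : N.outDeg u = 2)
    (hlow : ∀ c, Relation.TransGen N.arc u c → N.outDeg c ≠ 2) :
    (∃ a ∈ X, ∃ b ∈ X, N.Cherry a b) ∨ (∃ a ∈ X, ∃ b ∈ X, N.RetCherry a b) := by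
  obtain ⟨a, hua, ha⟩ := htc u (by unfold IsLeaf; omega)
  obtain ⟨haIn, haLeaf⟩ := hB.isLeaf_of_not_isRet (hlow a (.single hua)) ha
  obtain ⟨b, hub, hba⟩ := exists_arc_ne_of_outDeg_eq_two hu a
  by_cases hb : N.IsRet b
  · have hbOut := hB.outDeg_eq_one_of_isRet hb
    obtain ⟨c, hbc, hc⟩ := htc b (by unfold IsLeaf; omega)
    have hcLeaf := (hB.isLeaf_of_not_isRet (hlow c (.tail (.single hub) hbc)) hc).2
    -- `a` has the single parent `u`, which cannot also be the child `b` of `u`.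
    have hac : a ≠ c := by
      rintro rfl
      obtain rfl := eq_of_arc_of_inDeg_eq_one haIn hua hbc
      exact hN.acyclic u (.single hub)
    exact .inr (hN.retCherry_of_arcs haLeaf hcLeaf hac hua hbc hb hub)
  · have hbLeaf := (hB.isLeaf_of_not_isRet (hlow b (.single hub)) hb).2
    exact .inl (hN.cherry_of_arcs haLeaf hbLeaf hba.symm hua hub)

end PhyloNet

open PhyloNet in
/-- A normal network with at least two leaves has a cherry or a
reticulated cherry. -/
theorem normal_has_cherry_or_retCherry {α : Type} (X : Finset α) (N : PhyloNet α)
    (hN : N.IsNetworkOn X) (hnorm : N.Normal) (hX : 2 ≤ X.card) :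
    (∃ a ∈ X, ∃ b ∈ X, N.Cherry a b) ∨ (∃ a ∈ X, ∃ b ∈ X, N.RetCherry a b) := by
  have hB := hN.isBinary hX
  have := hN.finiteV
  obtain ⟨r, hr⟩ := hN.rooted
  obtain ⟨u, hu, hlow⟩ :=
    exists_lowest_of_acyclic hN.acyclic (P := fun v => N.outDeg v = 2)
      (hB.outDeg_eq_two_of_inDeg_eq_zero hr.1)
  exact hN.exists_cherry_or_retCherry_of_lowest hB hnorm.1 hu hlow
end

section
/- Let R and Q be the sets of triples and quads, respectively, displayed by a rooted binary phylogenetic network N on X, where |X| ≥ 3. Let a and b be distinct elements of X and let c ∈ X − {a, b}. If W is a candidate set for b containing c, then W is the unique candidate set for b containing c; that is, any candidate set for b containing c equals W. -/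
namespace PhyloNet

variable {α : Type} {N : PhyloNet α} {X : Finset α} {a b c : α} {W W' : Set α}

theorem CandidateSet.subset_of_mem (hW : N.CandidateSet X a b W) (hW' : N.CandidateSet X a b W')
    (hcW : c ∈ W) (hcW' : c ∈ W') : W' ⊆ W := by
  obtain ⟨-, -, hWI, -, -⟩ := hW
  obtain ⟨-, hW'sub, -, hW'II, -⟩ := hW'
  intro x hxW'
  by_contra hxW
  obtain ⟨hxX, hxab⟩ := hW'sub hxW'
  have hxb : x ≠ b := fun h => hxab (Or.inr h)
  have hcx : c ≠ x := fun h => hxW (h ▸ hcW)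
  exact hW'II c hcW' x hxW' hcx (hWI c hcW x hxX hxW hxb).1

end PhyloNet

open PhyloNet in
theorem candidateSet_unique_general {α : Type} (X : Finset α) (N : PhyloNet α)
    (a b c : α)
    (W W' : Set α)
    (hW : N.CandidateSet X a b W) (hcW : c ∈ W)
    (hW' : N.CandidateSet X a b W') (hcW' : c ∈ W') :
    W' = W :=
  (hW.subset_of_mem hW' hcW hcW').antisymm (hW'.subset_of_mem hW hcW' hcW)

open PhyloNet in
/-- A candidate set for `b` containing `c` is unique. -/
theorem candidateSet_unique {α : Type} (X : Finset α) (N : PhyloNet α)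
    (hN : N.IsNetworkOn X) (hX : 3 ≤ X.card)
    (a b c : α) (ha : a ∈ X) (hb : b ∈ X) (hc : c ∈ X)
    (hab : a ≠ b) (hca : c ≠ a) (hcb : c ≠ b)
    (W W' : Set α)
    (hW : N.CandidateSet X a b W) (hcW : c ∈ W)
    (hW' : N.CandidateSet X a b W') (hcW' : c ∈ W') :
    W' = W :=
  candidateSet_unique_general X N a b c W W' hW hcW hW' hcW'
end

section
/- Let N be a temporal normal network on X, where |X| ≥ 2. Then N has either a cherry or a double-reticulated cherry. -/
/-!
Take a non-leaf vertex `v` of maximal time. A child of a vertex at that time is a leaf or a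
reticulation at the same time, since time strictly increases along tree arcs; by tree-child,
every non-leaf vertex at that time therefore has a leaf child. If `v` or its second child is a
reticulation `r`, then `r` and both its parents lie at the maximal time, and their three leaf
children form a double-reticulated cherry. Otherwise the two children of `v` are leaves and
form a cherry.
-/

namespace PhyloNet

variable {α : Type} {X : Finset α} {N : PhyloNet α}

def IsTimeMap (N : PhyloNet α) (t : N.V → ℝ) : Prop :=
  ∀ u v : N.V, N.arc u v → ((N.IsRet v → t u = t v) ∧ (¬ N.IsRet v → t u < t v))

theorem IsNetworkOn.ne_of_arc (hN : N.IsNetworkOn X) {u v : N.V} (h : N.arc u v) : u ≠ v := by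
  rintro rfl
  exact hN.acyclic u (.single h)

section Degrees

variable {u v w L : N.V}

theorem IsBinary.not_isLeaf_of_isRet (hb : N.IsBinary) (hv : N.IsRet v) : ¬ N.IsLeaf v := by
  unfold IsRet at hv
  unfold IsLeaf
  rcases hb v with h | h | h | h <;> omega

theorem IsBinary.not_isLeaf_of_inDeg_eq_zero (hb : N.IsBinary) (hv : N.inDeg v = 0) :
    ¬ N.IsLeaf v := by
  unfold IsLeaf
  rcases hb v with h | h | h | h <;> omega

theorem IsBinary.outDeg_eq_two (hb : N.IsBinary) (hl : ¬ N.IsLeaf v) (hr : ¬ N.IsRet v) :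
    N.outDeg v = 2 := by
  unfold IsLeaf at hl
  unfold IsRet at hr
  rcases hb v with h | h | h | h <;> omega

theorem IsBinary.inDeg_eq_one_of_isLeaf (hb : N.IsBinary) (hv : N.IsLeaf v) :
    N.inDeg v = 1 := by
  unfold IsLeaf at hv
  rcases hb v with h | h | h | h <;> omega

theorem IsNetworkOn.exists_not_isLeaf (hN : N.IsNetworkOn X) (hb : N.IsBinary) :
    ∃ v : N.V, ¬ N.IsLeaf v :=
  let ⟨r, hr, _⟩ := hN.rooted
  ⟨r, hb.not_isLeaf_of_inDeg_eq_zero hr⟩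

theorem IsBinary.exists_child_ne (hb : N.IsBinary) (hl : ¬ N.IsLeaf v) (hr : ¬ N.IsRet v)
    (x : N.V) : ∃ w : N.V, N.arc v w ∧ w ≠ x :=
  Set.exists_ne_of_one_lt_ncard (show 1 < N.outDeg v by rw [hb.outDeg_eq_two hl hr]; omega) x

variable [Finite N.V]

theorem not_isLeaf_of_arc (h : N.arc u w) : ¬ N.IsLeaf u := fun hu =>
  Set.notMem_empty w ((Set.ncard_eq_zero).mp hu ▸ h)

theorem IsBinary.eq_of_arc_of_arc (hb : N.IsBinary) (hL : N.IsLeaf L) (hu : N.arc u L)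
    (hv : N.arc v L) : u = v :=
  (Set.ncard_le_one_iff).mp (hb.inDeg_eq_one_of_isLeaf hL).le hu hv

theorem IsRet.exists_two_parents (hr : N.IsRet v) :
    ∃ g₁ g₂ : N.V, N.arc g₁ v ∧ N.arc g₂ v ∧ g₁ ≠ g₂ :=
  (Set.one_lt_ncard_iff).mp (show 1 < N.inDeg v by unfold IsRet at hr; omega)

theorem IsNetworkOn.exists_doubleRetCherry_of_arcs (hN : N.IsNetworkOn X) (hb : N.IsBinary)
    {pa pb pc La Lb Lc : N.V} (hLa : N.IsLeaf La) (hLb : N.IsLeaf Lb) (hLc : N.IsLeaf Lc)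
    (ha : N.arc pa La) (hb' : N.arc pb Lb) (hc : N.arc pc Lc) (hret : N.IsRet pb)
    (hab : N.arc pa pb) (hcb : N.arc pc pb) (hac : pa ≠ pc) :
    ∃ a ∈ X, ∃ b ∈ X, ∃ c ∈ X, N.DoubleRetCherry a b c := by
  obtain ⟨a, haX, rfl⟩ := hN.leaf_surj La hLa
  obtain ⟨b, hbX, rfl⟩ := hN.leaf_surj Lb hLb
  obtain ⟨c, hcX, rfl⟩ := hN.leaf_surj Lc hLc
  have label_ne {x y : α} {px py : N.V} (hLx : N.IsLeaf (N.leafMap x))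
      (hx : N.arc px (N.leafMap x)) (hy : N.arc py (N.leafMap y)) (hxy : px ≠ py) : x ≠ y := by
    rintro rfl
    exact hxy (hb.eq_of_arc_of_arc hLx hx hy)
  exact ⟨a, haX, b, hbX, c, hcX, label_ne hLa ha hb' (hN.ne_of_arc hab),
    label_ne hLb hb' hc (hN.ne_of_arc hcb).symm, label_ne hLa ha hc hac,
    pa, pb, pc, ha, hb', hc, hret, hab, hcb⟩

end Degrees

section MaximalTime

variable {t : N.V → ℝ} {m : ℝ} {u w : N.V}

theorem IsTimeMap.isLeaf_or_isRet_of_arc (ht : N.IsTimeMap t)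
    (hmax : ∀ x, ¬ N.IsLeaf x → t x ≤ m) (hu : t u = m) (h : N.arc u w) :
    N.IsLeaf w ∨ (N.IsRet w ∧ t w = m) := by
  by_cases hl : N.IsLeaf w
  · exact .inl hl
  by_cases hr : N.IsRet w
  · exact .inr ⟨hr, ((ht u w h).1 hr).symm.trans hu⟩
  · exact absurd (hmax w hl) (not_le.mpr (hu ▸ (ht u w h).2 hr))

theorem IsTimeMap.exists_leaf_child (ht : N.IsTimeMap t) (hmax : ∀ x, ¬ N.IsLeaf x → t x ≤ m)
    (htc : N.TreeChild) (hu : t u = m) (hl : ¬ N.IsLeaf u) :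
    ∃ L : N.V, N.arc u L ∧ N.IsLeaf L := by
  obtain ⟨w, hw, hr⟩ := htc u hl
  exact ⟨w, hw, (ht.isLeaf_or_isRet_of_arc hmax hu hw).resolve_right fun h => hr h.1⟩

theorem IsTimeMap.exists_doubleRetCherry [Finite N.V] (ht : N.IsTimeMap t)
    (hmax : ∀ x, ¬ N.IsLeaf x → t x ≤ m) (hN : N.IsNetworkOn X) (hb : N.IsBinary)
    (htc : N.TreeChild) (hr : N.IsRet u) (hu : t u = m) :
    ∃ a ∈ X, ∃ b ∈ X, ∃ c ∈ X, N.DoubleRetCherry a b c := by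
  obtain ⟨g₁, g₂, h₁, h₂, hne⟩ := hr.exists_two_parents
  have ht₁ : t g₁ = m := ((ht _ _ h₁).1 hr).trans hu
  have ht₂ : t g₂ = m := ((ht _ _ h₂).1 hr).trans hu
  obtain ⟨L₁, hL₁, hL₁leaf⟩ := ht.exists_leaf_child hmax htc ht₁ (not_isLeaf_of_arc h₁)
  obtain ⟨L₂, hL₂, hL₂leaf⟩ := ht.exists_leaf_child hmax htc ht₂ (not_isLeaf_of_arc h₂)
  obtain ⟨L, hL, hLleaf⟩ := ht.exists_leaf_child hmax htc hu (hb.not_isLeaf_of_isRet hr)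
  exact hN.exists_doubleRetCherry_of_arcs hb hL₁leaf hLleaf hL₂leaf hL₁ hL hL₂ hr h₁ h₂ hne

end MaximalTime

end PhyloNet

open PhyloNet in
/-- A temporal normal network with at least two leaves has a
cherry or a double-reticulated cherry. -/
theorem temporal_normal_has_cherry_or_doubleRetCherry {α : Type} (X : Finset α)
    (N : PhyloNet α) (hN : N.IsNetworkOn X) (hnorm : N.Normal)
    (htemp : N.Temporal) (hX : 2 ≤ X.card) :
    (∃ a ∈ X, ∃ b ∈ X, N.Cherry a b) ∨
    (∃ a ∈ X, ∃ b ∈ X, ∃ c ∈ X, N.DoubleRetCherry a b c) := by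
  have hb := hN.isBinary hX
  have : Finite N.V := hN.finiteV
  obtain ⟨t, -, ht : N.IsTimeMap t⟩ := htemp
  obtain ⟨v, hv, hmax⟩ := Set.exists_max_image {x : N.V | ¬ N.IsLeaf x} t (Set.toFinite _)
    (hN.exists_not_isLeaf hb)
  by_cases hr : N.IsRet v
  · exact .inr (ht.exists_doubleRetCherry hmax hN hb hnorm.1 hr rfl)
  obtain ⟨L, hL, hLleaf⟩ := ht.exists_leaf_child hmax hnorm.1 rfl hv
  obtain ⟨w, hw, hwL⟩ := hb.exists_child_ne hv hr L
  rcases ht.isLeaf_or_isRet_of_arc hmax rfl hw with hwleaf | ⟨hwr, htw⟩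
  · obtain ⟨a, haX, rfl⟩ := hN.leaf_surj L hLleaf
    obtain ⟨b, hbX, rfl⟩ := hN.leaf_surj w hwleaf
    exact .inl ⟨a, haX, b, hbX, ne_of_apply_ne N.leafMap hwL.symm, v, hL, hw⟩
  · exact .inr (ht.exists_doubleRetCherry hmax hN hb hnorm.1 hwr htw)
end
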